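/- arXiv:1010.2809 — 2 statements merged into one kernel-verified Lean document; each statement's English description precedes it below -/
import Mathlib

section
/- Let F be a piecewise smooth map on the circle S^1, smooth on three pairwise disjoint open intervals I1, I2, I3 whose closures cover S^1. Suppose |F'| ≥ a > 1 on I1, |F'| ≥ b > 0 on I2 with ln(a) > |ln(b)|, and F' = 1 on I3. If F(I2) ⊂ I3, F(I3) ∩ I2 = ∅, and F(I3) ≠ I3, then for every θ0 whose forward orbit avoids the (finitely many) interval endpoints and for which the Lyapunov exponent λ(θ0) = lim_{N→∞} (1/N) Σ_{n=0}^{N} ln|F'(F^n(θ0))| exists, one has λ(θ0) > 0. -/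
/-!
Since `F' = 1` on `I3 = (p, q)`, `F` is a translation `x ↦ x + c` there, and `c ≠ 0` because
`F(I3) ≠ I3`; so an orbit stays in `I3` for at most `(q - p) / |c|` consecutive steps, and leaves
it away from `I2`. For a small `δ > 0` the bounded nonnegative potential `V`, equal to `0` on `I1`,
`ln a - δ` on `I2` and `δ (1 + number of steps left before leaving)` on `I3`, satisfies
`V (F x) + δ ≤ V x + ln |F' x|` at every point of the three intervals: the gain `ln a` on `I1`
pays for the loss `|ln b|` on `I2` and for the passage through `I3`, where nothing is gained.
Summing along the orbit telescopes, so the Lyapunov exponent is at least `δ`.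
-/

open Set Filter Topology Finset Real

theorem le_of_tendsto_average_of_potential {g V : ℕ → ℝ} {δ L : ℝ}
    (hV : ∀ n, 0 ≤ V n) (hstep : ∀ n, V (n + 1) + δ ≤ V n + g n)
    (hL : Tendsto (fun N : ℕ => (1 / (N : ℝ)) * ∑ n ∈ range (N + 1), g n) atTop (𝓝 L)) :
    δ ≤ L := by
  have hsum (N : ℕ) : δ * (N + 1) - V 0 ≤ ∑ n ∈ range (N + 1), g n :=
    calc δ * (N + 1) - V 0 ≤ ∑ n ∈ range (N + 1), (V (n + 1) - V n + δ) := by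
          rw [sum_add_distrib, sum_range_sub, sum_const, card_range, nsmul_eq_mul]
          push_cast
          linarith [hV (N + 1)]
      _ ≤ ∑ n ∈ range (N + 1), g n := sum_le_sum fun n _ => by linarith [hstep n]
  have hlow : Tendsto (fun N : ℕ => δ + (δ - V 0) * (1 / (N : ℝ))) atTop (𝓝 δ) := by
    simpa using tendsto_const_nhds.add
      (tendsto_const_nhds.mul (tendsto_one_div_atTop_nhds_zero_nat (𝕜 := ℝ)))
  refine le_of_tendsto_of_tendsto hlow hL (eventually_atTop.mpr ⟨1, fun N hN => ?_⟩)
  have hN : (0 : ℝ) < N := by exact_mod_cast hN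
  calc δ + (δ - V 0) * (1 / (N : ℝ)) = 1 / (N : ℝ) * (δ * (N + 1) - V 0) := by
        field_simp; ring
    _ ≤ 1 / (N : ℝ) * ∑ n ∈ range (N + 1), g n := by gcongr; exact hsum N

/-- The number of steps of `x ↦ x + c` needed to carry `x` to the endpoint of `Ioo p q` lying in
the direction of `c`. -/
noncomputable def exitTime (p q c x : ℝ) : ℝ := ((if 0 < c then q else p) - x) / c

section exitTime

variable {p q c x : ℝ}

theorem exitTime_add_self (hc : c ≠ 0) : exitTime p q c (x + c) = exitTime p q c x - 1 := by
  unfold exitTime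
  field_simp
  ring

theorem exitTime_pos (hc : c ≠ 0) (hx : x ∈ Ioo p q) : 0 < exitTime p q c x := by
  unfold exitTime
  rcases hc.lt_or_gt with hc | hc
  · simpa [hc.not_gt] using div_pos_of_neg_of_neg (sub_neg.mpr hx.1) hc
  · simpa [hc] using div_pos (sub_pos.mpr hx.2) hc

theorem exitTime_le (hx : x ∈ Ioo p q) : exitTime p q c x ≤ (q - p) / |c| := by
  unfold exitTime
  rcases lt_trichotomy c 0 with hc | rfl | hc
  · rw [if_neg hc.not_gt, abs_of_neg hc, ← neg_div_neg_eq]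
    gcongr <;> linarith [hx.2]
  · simp
  · rw [if_pos hc, abs_of_pos hc]
    gcongr
    exact hx.1.le

end exitTime

open Classical in
noncomputable def potential (I2 : Set ℝ) (p q c a δ x : ℝ) : ℝ :=
  if x ∈ I2 then log a - δ else if x ∈ Ioo p q then δ * (1 + exitTime p q c x) else 0

section potential

variable {I2 : Set ℝ} {p q c a b δ : ℝ}

theorem potential_nonneg (hpq : p < q) (hc : c ≠ 0) (hδ : 0 < δ)
    (hK : δ * (3 + (q - p) / |c|) ≤ log a - |log b|) (x : ℝ) :
    0 ≤ potential I2 p q c a δ x := by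
  have hLc : 0 ≤ (q - p) / |c| := div_nonneg (sub_nonneg.mpr hpq.le) (abs_nonneg c)
  unfold potential
  split_ifs with h2 h3
  · nlinarith [abs_nonneg (log b)]
  · exact mul_nonneg hδ.le (by linarith [exitTime_pos hc h3])
  · exact le_rfl

theorem potential_le (hpq : p < q) (hδ : 0 < δ)
    (hK : δ * (3 + (q - p) / |c|) ≤ log a - |log b|) (x : ℝ) :
    potential I2 p q c a δ x ≤ log a - δ := by
  have hLc : 0 ≤ (q - p) / |c| := div_nonneg (sub_nonneg.mpr hpq.le) (abs_nonneg c)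
  unfold potential
  split_ifs with h2 h3
  · exact le_rfl
  · nlinarith [abs_nonneg (log b), exitTime_le (c := c) h3]
  · nlinarith [abs_nonneg (log b)]

theorem potential_step {F : ℝ → ℝ} {I1 : Set ℝ} (hpq : p < q) (hc0 : c ≠ 0) (hδ : 0 < δ)
    (hK : δ * (3 + (q - p) / |c|) ≤ log a - |log b|) (ha : 0 < a) (hb : 0 < b)
    (hd1 : ∀ x ∈ I1, a ≤ |deriv F x|) (hd2 : ∀ x ∈ I2, b ≤ |deriv F x|)
    (hd3 : ∀ x ∈ Ioo p q, deriv F x = 1) (hc : ∀ x ∈ Ioo p q, F x = x + c)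
    (hdisj : Disjoint I2 (Ioo p q)) (h23 : F '' I2 ⊆ Ioo p q) (h32 : F '' Ioo p q ∩ I2 = ∅)
    {x : ℝ} (hx : x ∈ I1 ∪ I2 ∪ Ioo p q) :
    potential I2 p q c a δ (F x) + δ ≤ potential I2 p q c a δ x + log |deriv F x| := by
  rcases hx with (hx | hx) | hx
  · have hg : log a ≤ log |deriv F x| := log_le_log ha (hd1 x hx)
    linarith [potential_le (I2 := I2) (c := c) hpq hδ hK (F x),
      potential_nonneg (I2 := I2) hpq hc0 hδ hK x]
  · have hFx : F x ∈ Ioo p q := h23 (mem_image_of_mem F hx)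
    have hg : log b ≤ log |deriv F x| := log_le_log hb (hd2 x hx)
    have hLc := exitTime_le (c := c) hFx
    simp only [potential, if_pos hx, if_neg (disjoint_right.mp hdisj hFx), if_pos hFx]
    nlinarith [neg_abs_le (log b)]
  · have hFx : F x ∉ I2 := fun h => h32.subset ⟨mem_image_of_mem F hx, h⟩
    have hr := exitTime_pos hc0 hx
    simp only [potential, if_neg (disjoint_right.mp hdisj hx), if_pos hx, if_neg hFx, hd3 x hx,
      abs_one, log_one, add_zero]
    split_ifs with h3
    · rw [hc x hx, exitTime_add_self hc0]
      linarith
    · nlinarith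

end potential

theorem stmt_0_general (F : ℝ → ℝ) (I1 I2 I3 : Set ℝ) (a b : ℝ)
    (hopen3 : ∃ p q : ℝ, p < q ∧ I3 = Set.Ioo p q)
    (hdisj23 : Disjoint I2 I3)
    (hsmooth : ∀ θ ∈ I1 ∪ I2 ∪ I3, DifferentiableAt ℝ F θ)
    (ha : 1 < a) (hb : 0 < b) (hab : |Real.log b| < Real.log a)
    (hd1 : ∀ θ ∈ I1, a ≤ |deriv F θ|)
    (hd2 : ∀ θ ∈ I2, b ≤ |deriv F θ|)
    (hd3 : ∀ θ ∈ I3, deriv F θ = 1)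
    (h23 : F '' I2 ⊆ I3) (h32 : (F '' I3) ∩ I2 = ∅) (h33 : F '' I3 ≠ I3)
    (θ0 : ℝ)
    (horbit : ∀ n : ℕ, F^[n] θ0 ∈ I1 ∪ I2 ∪ I3)
    (L : ℝ)
    (hL : Filter.Tendsto
      (fun N : ℕ => (1 / (N : ℝ)) * ∑ n ∈ Finset.range (N + 1), Real.log |deriv F (F^[n] θ0)|)
      Filter.atTop (nhds L)) :
    0 < L := by
  obtain ⟨p, q, hpq, rfl⟩ := hopen3
  obtain ⟨c, hc⟩ := isOpen_Ioo.exists_eq_add_of_deriv_eq isPreconnected_Ioo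
    (fun x hx => (hsmooth x (Or.inr hx)).differentiableWithinAt) differentiableOn_id
    (fun x hx => by simp [hd3 x hx])
  have hc0 : c ≠ 0 := by
    rintro rfl
    exact h33 ((image_congr fun x hx => by simpa using hc hx).trans (image_id _))
  have hden : 0 < 3 + (q - p) / |c| :=
    add_pos_of_pos_of_nonneg three_pos (div_nonneg (sub_nonneg.mpr hpq.le) (abs_nonneg c))
  set δ := (log a - |log b|) / (3 + (q - p) / |c|)
  have hδ : 0 < δ := div_pos (sub_pos.mpr hab) hden
  have hK : δ * (3 + (q - p) / |c|) ≤ log a - |log b| := (div_mul_cancel₀ _ hden.ne').le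
  refine hδ.trans_le (le_of_tendsto_average_of_potential
    (V := fun n => potential I2 p q c a δ (F^[n] θ0))
    (fun n => potential_nonneg hpq hc0 hδ hK _) (fun n => ?_) hL)
  rw [Function.iterate_succ_apply']
  exact potential_step hpq hc0 hδ hK (by linarith) hb hd1 hd2 hd3 hc
    hdisj23 h23 h32 (horbit n)

/-- Positive-Lyapunov lemma. The circle is modeled as `[0,1]` (with
endpoints identified); `F` maps `[0,1]` to itself, is differentiable on the three
pairwise disjoint open intervals `I1, I2, I3` whose closures cover `[0,1]`, with
`|F'| ≥ a > 1` on `I1`, `|F'| ≥ b > 0` on `I2`, `ln a > |ln b|`, `F' = 1` on `I3`,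
`F(I2) ⊆ I3`, `F(I3) ∩ I2 = ∅`, `F(I3) ≠ I3`. Then any orbit avoiding the interval
endpoints whose Lyapunov exponent exists has a strictly positive exponent. -/
theorem stmt_0 (F : ℝ → ℝ) (I1 I2 I3 : Set ℝ) (a b : ℝ)
    (hmaps : Set.MapsTo F (Set.Icc 0 1) (Set.Icc 0 1))
    (hopen1 : ∃ p q : ℝ, p < q ∧ I1 = Set.Ioo p q)
    (hopen2 : ∃ p q : ℝ, p < q ∧ I2 = Set.Ioo p q)
    (hopen3 : ∃ p q : ℝ, p < q ∧ I3 = Set.Ioo p q)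
    (hdisj12 : Disjoint I1 I2) (hdisj13 : Disjoint I1 I3) (hdisj23 : Disjoint I2 I3)
    (hcover : closure I1 ∪ closure I2 ∪ closure I3 = Set.Icc 0 1)
    (hsmooth : ∀ θ ∈ I1 ∪ I2 ∪ I3, DifferentiableAt ℝ F θ)
    (ha : 1 < a) (hb : 0 < b) (hab : |Real.log b| < Real.log a)
    (hd1 : ∀ θ ∈ I1, a ≤ |deriv F θ|)
    (hd2 : ∀ θ ∈ I2, b ≤ |deriv F θ|)
    (hd3 : ∀ θ ∈ I3, deriv F θ = 1)
    (h23 : F '' I2 ⊆ I3) (h32 : (F '' I3) ∩ I2 = ∅) (h33 : F '' I3 ≠ I3)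
    (θ0 : ℝ) (hθ0 : θ0 ∈ Set.Icc 0 1)
    (horbit : ∀ n : ℕ, F^[n] θ0 ∈ I1 ∪ I2 ∪ I3)
    (L : ℝ)
    (hL : Filter.Tendsto
      (fun N : ℕ => (1 / (N : ℝ)) * ∑ n ∈ Finset.range (N + 1), Real.log |deriv F (F^[n] θ0)|)
      Filter.atTop (nhds L)) :
    0 < L :=
  stmt_0_general F I1 I2 I3 a b hopen3 hdisj23 hsmooth ha hb hab hd1 hd2 hd3 h23 h32 h33 θ0 horbit L
    hL
end

section
/- For the slow ODE with saturating exponential ramp (b > 0), where g(εt) = (1 - e^{-bεt})(a/b - y_i) so that g^{-1}(y) = -(1/b) ln(1 + y/(y_i - a/b)), the integral condition 0 = ∫_{y_i}^{y_j} (d/dy g^{-1}(y - y_i)) · y dy is equivalent to the relation y_i - y_j = (a/b) · ln((b·y_j - a)/(b·y_i - a)). -/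
/-!
Undoing the substitution `g⁻¹`, the integrand collapses to `y / (a - b y)`, whose antiderivative
is `-y / b - (a / b²) log (b y - a)`. Since `b y - a` is affine in `y` and negative at both
endpoints, it does not vanish in between, so the fundamental theorem of calculus applies.
-/

open Set

lemma mul_sub_neg_of_mem_uIcc {a b x₁ x₂ y : ℝ} (h₁ : b * x₁ - a < 0) (h₂ : b * x₂ - a < 0)
    (hy : y ∈ uIcc x₁ x₂) : b * y - a < 0 := by
  have hconv : Convex ℝ {y : ℝ | b * y - a < 0} := by
    simpa using convex_halfSpace_lt (f := fun y : ℝ => b * y) (IsLinearMap.isLinearMap_smul b) a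
  exact hconv.segment_subset h₁ h₂ (segment_eq_uIcc x₁ x₂ ▸ hy)

lemma hasDerivAt_neg_div_sub_mul_log {a b y : ℝ} (hb : b ≠ 0) (hy : b * y - a ≠ 0) :
    HasDerivAt (fun y => -y / b - a / b ^ 2 * Real.log (b * y - a)) (y / (a - b * y)) y := by
  have hlog := (((hasDerivAt_id' y).const_mul b).sub_const a).log hy
  refine (((hasDerivAt_id' y).neg.div_const b).sub (hlog.const_mul (a / b ^ 2))).congr_deriv ?_
  have : a - b * y ≠ 0 := fun h => hy (by linarith)
  field_simp
  ring

lemma integral_div_sub_mul {a b x₁ x₂ : ℝ} (hb : b ≠ 0)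
    (hne : ∀ y ∈ uIcc x₁ x₂, b * y - a ≠ 0) :
    ∫ y in x₁..x₂, y / (a - b * y) =
      (x₁ - x₂ - a / b * Real.log ((b * x₂ - a) / (b * x₁ - a))) / b := by
  have hderiv : ∀ y ∈ uIcc x₁ x₂, HasDerivAt
      (fun y => -y / b - a / b ^ 2 * Real.log (b * y - a)) (y / (a - b * y)) y :=
    fun y hy => hasDerivAt_neg_div_sub_mul_log hb (hne y hy)
  have hcont : ContinuousOn (fun y : ℝ => y / (a - b * y)) (uIcc x₁ x₂) :=
    continuousOn_id.div (by fun_prop) fun y hy h => hne y hy (by linarith)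
  rw [intervalIntegral.integral_eq_sub_of_hasDerivAt hderiv hcont.intervalIntegrable,
    Real.log_div (hne x₂ right_mem_uIcc) (hne x₁ left_mem_uIcc)]
  field_simp
  ring

lemma saturatingRamp_denom_eq {a b yi : ℝ} (hb : b ≠ 0) (hi : b * yi - a ≠ 0) (y : ℝ) :
    b * (1 + (y - yi) / (yi - a / b)) * (a / b - yi) = a - b * y := by
  have : yi - a / b ≠ 0 := by
    rw [sub_div' hb]
    exact div_ne_zero (by rwa [mul_comm]) hb
  field_simp
  ring

theorem stmt_4_general (a b yi yj : ℝ) (hb : 0 < b)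
    (hi : b * yi - a < 0) (hj : b * yj - a < 0) :
    ((0 : ℝ) = ∫ y in yi..yj, y / (b * (1 + (y - yi) / (yi - a / b)) * (a / b - yi))) ↔
      yi - yj = (a / b) * Real.log ((b * yj - a) / (b * yi - a)) := by
  simp_rw [saturatingRamp_denom_eq hb.ne' hi.ne]
  rw [integral_div_sub_mul hb.ne' fun y hy => (mul_sub_neg_of_mem_uIcc hi hj hy).ne, eq_comm,
    div_eq_zero_iff, or_iff_left hb.ne', sub_eq_zero]

/-- For the saturating-exponential ramp (`b > 0`), the integral
jump-up condition is equivalent to `y_i - y_j = (a/b) · ln((b y_j - a)/(b y_i - a))`. -/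
theorem stmt_4 (a b ε yi yj : ℝ) (ha : 0 < a) (hb : 0 < b) (hε : 0 < ε)
    (hyi : yi < 0) (hyj : 0 < yj)
    (hi : b * yi - a < 0) (hj : b * yj - a < 0) :
    ((0 : ℝ) = ∫ y in yi..yj, y / (b * (1 + (y - yi) / (yi - a / b)) * (a / b - yi))) ↔
      yi - yj = (a / b) * Real.log ((b * yj - a) / (b * yi - a)) :=
  stmt_4_general a b yi yj hb hi hj
end
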